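/- Let V_int and V_bd be disjoint finite sets (the interior and boundary vertices of a quadrilateral mesh with boundary) with valence functions d : V_int → ℕ and d : V_bd → ℕ giving the number of faces incident to each vertex, and let E_int, E_bd, F : ℕ (interior edges, boundary edges, faces) satisfy: ∑_{v ∈ V_int} d(v) + ∑_{v ∈ V_bd} d(v) = 4·F (each quadrilateral face contributes four vertex–face incidences), 4·F = 2·E_int + E_bd (each face has four edges; interior edges border two faces, boundary edges one), and E_bd = |V_bd| (the boundary is a disjoint union of cycles). Then ∑_{v ∈ V_int} (4 − d(v))·(π/2) + ∑_{v ∈ V_bd} (2 − d(v))·(π/2) = 2π·((|V_int| + |V_bd|) − (E_int + E_bd) + F). -/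
import Mathlib

open Real

/-- Gauss–Bonnet condition for a quadrilateral mesh with boundary:
interior vertices contribute `(4 − d(v))·π/2` and boundary vertices
`(2 − d(v))·π/2`, and the total equals `2π·χ`. -/
theorem quad_mesh_metric_total_curvature_with_boundary
    (Vint Vbd : Type*) [Fintype Vint] [Fintype Vbd]
    (dint : Vint → ℕ) (dbd : Vbd → ℕ) (Eint Ebd F : ℕ)
    (hFace : ∑ v, dint v + ∑ v, dbd v = 4 * F)
    (hEdge : 4 * F = 2 * Eint + Ebd)
    (hBd : Ebd = Fintype.card Vbd) :
    ∑ v, ((4 : ℝ) - (dint v : ℝ)) * (π / 2)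
      + ∑ v, ((2 : ℝ) - (dbd v : ℝ)) * (π / 2) =
      2 * π * (((Fintype.card Vint : ℝ) + (Fintype.card Vbd : ℝ))
        - ((Eint : ℝ) + (Ebd : ℝ)) + (F : ℝ)) := by
  have h1 : ∑ v, ((4 : ℝ) - (dint v : ℝ)) * (π / 2)
      = ((4 : ℝ) * Fintype.card Vint - (∑ v, dint v : ℕ)) * (π / 2) := by
    rw [← Finset.sum_mul]
    congr 1
    rw [Finset.sum_sub_distrib, Finset.sum_const]
    push_cast [Finset.card_univ]
    ring
  have h2 : ∑ v, ((2 : ℝ) - (dbd v : ℝ)) * (π / 2)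
      = ((2 : ℝ) * Fintype.card Vbd - (∑ v, dbd v : ℕ)) * (π / 2) := by
    rw [← Finset.sum_mul]
    congr 1
    rw [Finset.sum_sub_distrib, Finset.sum_const]
    push_cast [Finset.card_univ]
    ring
  rw [h1, h2]
  have hF : ((∑ v, dint v : ℕ) : ℝ) + ((∑ v, dbd v : ℕ) : ℝ) = 4 * F := by
    exact_mod_cast congrArg (Nat.cast : ℕ → ℝ) hFace
  have hE : (4 : ℝ) * F = 2 * Eint + Ebd := by exact_mod_cast hEdge
  have hB : (Ebd : ℝ) = Fintype.card Vbd := by exact_mod_cast hBd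
  linear_combination (-(π/2)) * hF + (-π) * hE + π * hB
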